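/- Let f : 2^V → ℝ be a symmetric submodular function on a finite set V of cardinality n ≥ 2, and let (v_1, …, v_n) be an MC-ordering of V with respect to f. Then (v_{n−1}, v_n) is a contractible pair with respect to f. -/
import Mathlib


open Finset

def Submodular {V : Type*} [DecidableEq V] [Fintype V] (f : Finset V → ℝ) : Prop :=
  ∀ X Y : Finset V, f X + f Y ≥ f (X ∪ Y) + f (X ∩ Y)

def prefSet {V : Type*} [DecidableEq V] {n : ℕ} (v : Fin n → V) (i : Fin n) : Finset V :=
  (Finset.univ.filter (fun k : Fin n => k < i)).image v

def IsMCOrdering {V : Type*} [DecidableEq V] {n : ℕ} (f : Finset V → ℝ) (v : Fin n → V) : Prop :=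
  ∀ i j : Fin n, i ≤ j →
    f (insert (v i) (prefSet v i)) ≤ f (insert (v j) (prefSet v i))

/-- A pair `(u, w)` of distinct elements of `V` is a contractible pair with respect to `f`
if `f X ≥ min_{x ∈ V} f {x}` for every `X ⊊ V` with `|X ∩ {u, w}| = 1`. -/
def ContractiblePair {V : Type*} [DecidableEq V] [Fintype V]
    (f : Finset V → ℝ) (u w : V) : Prop :=
  ∀ X : Finset V, X ⊂ Finset.univ → (X ∩ ({u, w} : Finset V)).card = 1 →
    Finset.univ.inf' ⟨u, Finset.mem_univ u⟩ (fun x => f {x}) ≤ f X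

lemma iff_aux {a b c : Prop} (h1 : ¬(a ↔ c)) (h2 : ¬(b ↔ c)) : a ↔ b := by tauto

lemma exists_greatest_aux {p : ℕ → Prop} [DecidablePred p] {b i : ℕ} (hi : i ≤ b) (hp : p i) :
    ∃ r, r ≤ b ∧ p r ∧ ∀ j, r < j → j ≤ b → ¬ p j :=
  ⟨Nat.findGreatest p b, Nat.findGreatest_le b, Nat.findGreatest_spec hi hp,
   fun _ h1 h2 => Nat.findGreatest_is_greatest h1 h2⟩

/-- Theorem 4.2: for a symmetric submodular `f` and an MC-ordering `(v_1, …, v_n)` of `V`,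
the pair `(v_{n-1}, v_n)` is contractible. -/
theorem stmt_1 {n : ℕ} (hn : 2 ≤ n) {V : Type*} [DecidableEq V] [Fintype V]
    (f : Finset V → ℝ) (hsym : ∀ X : Finset V, f X = f Xᶜ) (hf : Submodular f)
    (v : Fin n → V) (hv : Function.Bijective v)
    (hMC : IsMCOrdering f v) :
    ContractiblePair f (v ⟨n - 2, by omega⟩) (v ⟨n - 1, by omega⟩) := by
  classical
  intro X hXss hXcard
  have hn0 : 0 < n := by omega
  have hn1 : n - 1 < n := by omega
  have hn2 : n - 2 < n := by omega
  obtain ⟨hinj, hsurj⟩ := hv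
  -- the sequence, indexed by ℕ
  set g : ℕ → V := fun i => v ⟨i % n, Nat.mod_lt i hn0⟩ with hg
  have hgv : ∀ (i : ℕ) (h : i < n), g i = v ⟨i, h⟩ := by
    intro i h
    simp only [hg]
    congr 1
    exact Fin.ext (Nat.mod_eq_of_lt h)
  have hginj : ∀ i j, i < n → j < n → g i = g j → i = j := by
    intro i j hi hj hij
    rw [hgv i hi, hgv j hj] at hij
    simpa using congrArg Fin.val (hinj hij)
  -- prefixes
  set P : ℕ → Finset V := fun t => (Finset.range t).image g with hP
  have hmemP : ∀ (x : V) (t : ℕ), x ∈ P t ↔ ∃ i, i < t ∧ g i = x := by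
    intro x t; simp [hP]
  have hP0 : P 0 = ∅ := by simp [hP]
  have hP1 : P 1 = {g 0} := by simp [hP]
  have hPsucc : ∀ t, P (t + 1) = insert (g t) (P t) := by
    intro t; simp [hP, Finset.range_add_one]
  have hPsub : ∀ s t : ℕ, s ≤ t → P s ⊆ P t := by
    intro s t hst
    exact Finset.image_subset_image (Finset.range_subset_range.mpr hst)
  have hgnotP : ∀ (i t : ℕ), t ≤ i → i < n → g i ∉ P t := by
    intro i t hti hin hmem
    rw [hmemP] at hmem
    obtain ⟨j, hj, hji⟩ := hmem
    have := hginj j i (by omega) hin hji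
    omega
  have hpref : ∀ (i : ℕ) (h : i < n), prefSet v ⟨i, h⟩ = P i := by
    intro i h
    ext x
    simp only [prefSet, Finset.mem_image, Finset.mem_filter, Finset.mem_univ, true_and, hmemP]
    constructor
    · rintro ⟨k, hk, rfl⟩
      refine ⟨(k : ℕ), by simpa [Fin.lt_def] using hk, ?_⟩
      rw [hgv _ k.isLt]
    · rintro ⟨j, hj, rfl⟩
      refine ⟨⟨j, by omega⟩, by simpa [Fin.lt_def] using hj, (hgv j (by omega)).symm⟩
  have hMC' : ∀ i j : ℕ, i ≤ j → j < n → f (P (i + 1)) ≤ f (insert (g j) (P i)) := by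
    intro i j hij hj
    have hi : i < n := by omega
    have h := hMC ⟨i, hi⟩ ⟨j, hj⟩ (by simpa [Fin.le_def] using hij)
    rw [hpref i hi] at h
    rw [hPsucc i, hgv i hi, hgv j hj]
    exact h
  -- the side S of v_{n-1}
  set S : Finset V := if v ⟨n - 1, hn1⟩ ∈ X then X else Xᶜ with hSdef
  have hfSX : f S = f X := by
    rw [hSdef]; split_ifs with h
    · rfl
    · exact (hsym X).symm
  have huw : v ⟨n - 2, hn2⟩ ≠ v ⟨n - 1, hn1⟩ := by
    intro hc
    have := hinj hc
    rw [Fin.mk.injEq] at this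
    omega
  have hcases : (v ⟨n - 1, hn1⟩ ∈ X ∧ v ⟨n - 2, hn2⟩ ∉ X) ∨
      (v ⟨n - 1, hn1⟩ ∉ X ∧ v ⟨n - 2, hn2⟩ ∈ X) := by
    by_cases h1 : v ⟨n - 2, hn2⟩ ∈ X <;> by_cases h2 : v ⟨n - 1, hn1⟩ ∈ X
    · exfalso
      have hsub : ({v ⟨n - 2, hn2⟩, v ⟨n - 1, hn1⟩} : Finset V) ⊆
          X ∩ ({v ⟨n - 2, hn2⟩, v ⟨n - 1, hn1⟩} : Finset V) := by
        intro y hy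
        rw [Finset.mem_insert, Finset.mem_singleton] at hy
        rcases hy with rfl | rfl <;> simp [h1, h2]
      have hc2 : ({v ⟨n - 2, hn2⟩, v ⟨n - 1, hn1⟩} : Finset V).card = 2 :=
        Finset.card_pair huw
      have := Finset.card_le_card hsub
      rw [hXcard, hc2] at this
      omega
    · exact Or.inr ⟨h2, h1⟩
    · exact Or.inl ⟨h2, h1⟩
    · exfalso
      have hempty : X ∩ ({v ⟨n - 2, hn2⟩, v ⟨n - 1, hn1⟩} : Finset V) = ∅ := by
        rw [Finset.eq_empty_iff_forall_notMem]
        intro y hy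
        rw [Finset.mem_inter, Finset.mem_insert, Finset.mem_singleton] at hy
        rcases hy with ⟨hyX, rfl | rfl⟩
        · exact h1 hyX
        · exact h2 hyX
      rw [hempty] at hXcard
      simp at hXcard
  have hgS1 : g (n - 1) ∈ S := by
    rw [hgv _ hn1, hSdef]
    split_ifs with h
    · exact h
    · rcases hcases with ⟨h1, _⟩ | ⟨h1, _⟩
      · exact absurd h1 h
      · simpa using h1
  have hgS2 : g (n - 2) ∉ S := by
    rw [hgv _ hn2, hSdef]
    split_ifs with h
    · rcases hcases with ⟨_, h2⟩ | ⟨h1, _⟩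
      · exact h2
      · exact absurd h h1
    · rcases hcases with ⟨h1, _⟩ | ⟨_, h2⟩
      · exact absurd h1 h
      · simpa using h2
  -- sides
  set sd : V → Finset V := fun x => if x ∈ S then S else Sᶜ with hsd
  have hmemsd : ∀ x y : V, y ∈ sd x ↔ (y ∈ S ↔ x ∈ S) := by
    intro x y
    simp only [hsd]
    by_cases hx : x ∈ S <;> simp [hx]
  -- MAIN CLAIM
  have claim : ∀ t, t < n → 0 < t → ¬((g t ∈ S) ↔ (g (t - 1) ∈ S)) →
      f (P t) + f {g 0} ≤ f (insert (g t) (P t ∩ sd (g t))) + f (P t \ sd (g t)) := by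
    intro t
    induction t using Nat.strong_induction_on with
    | _ t IH =>
      intro htn ht0 hact
      by_cases hall : ∀ i, i < t → ((g i ∈ S) ↔ (g (t - 1) ∈ S))
      · -- base case : everything before t is on the other side
        have hA : P t ∩ sd (g t) = ∅ := by
          rw [Finset.eq_empty_iff_forall_notMem]
          intro x hx
          rw [Finset.mem_inter, hmemP, hmemsd] at hx
          obtain ⟨⟨i, hi, rfl⟩, hside⟩ := hx
          exact hact (hside.symm.trans (hall i hi))
        have hB : P t \ sd (g t) = P t := by
          apply Finset.Subset.antisymm Finset.sdiff_subset
          intro x hx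
          rw [Finset.mem_sdiff]
          refine ⟨hx, fun hxs => ?_⟩
          have : x ∈ P t ∩ sd (g t) := Finset.mem_inter.mpr ⟨hx, hxs⟩
          rw [hA] at this
          simp at this
        rw [hA, hB]
        have h0 := hMC' 0 t (by omega) htn
        rw [hP1, hP0] at h0
        have hins : (insert (g t) (∅ : Finset V)) = {g t} := by simp
        rw [hins] at h0 ⊢
        linarith
      · -- inductive step
        obtain ⟨i₀, hi₀⟩ := not_forall.mp hall
        rw [Classical.not_imp] at hi₀
        obtain ⟨hi₀t, hi₀⟩ := hi₀
        have hi₀le : i₀ ≤ t - 1 := by omega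
        obtain ⟨r', hr'le, hr'spec, hmax'⟩ :=
          exists_greatest_aux (p := fun i => ¬((g i ∈ S) ↔ (g (t - 1) ∈ S))) hi₀le hi₀
        have hr'ne : r' ≠ t - 1 := by
          intro h
          rw [h] at hr'spec
          exact hr'spec Iff.rfl
        have hmax : ∀ i, r' < i → i ≤ t - 1 → ((g i ∈ S) ↔ (g (t - 1) ∈ S)) := by
          intro i h1 h2
          exact not_not.mp (hmax' i h1 h2)
        set q := r' + 1 with hqdef
        have hqt : q < t := by omega
        have hqn : q < n := by omega
        have hside_q : (g q ∈ S) ↔ (g (t - 1) ∈ S) := hmax q (by omega) (by omega)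
        have hqact : ¬((g q ∈ S) ↔ (g (q - 1) ∈ S)) := by
          have hq1 : q - 1 = r' := by omega
          rw [hq1]
          intro hc
          exact hr'spec (hc.symm.trans hside_q)
        have hrun : ∀ i, q ≤ i → i < t → ((g i ∈ S) ↔ (g q ∈ S)) := by
          intro i h1 h2
          exact (hmax i (by omega) (by omega)).trans hside_q.symm
        have htq : ¬((g t ∈ S) ↔ (g q ∈ S)) := fun hc => hact (hc.trans hside_q)
        set A := P q ∩ sd (g q) with hAdef
        set B := P q \ sd (g q) with hBdef
        have hIH := IH q hqt hqn (by omega) hqact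
        have hsubA : A ⊆ P q := by rw [hAdef]; exact Finset.inter_subset_left
        have hsubB : B ⊆ P q := by rw [hBdef]; exact Finset.sdiff_subset
        have hPqt : P q ⊆ P t := hPsub q t (le_of_lt hqt)
        have hgtPq : g t ∉ P q := hgnotP t q (le_of_lt hqt) htn
        have hgqPt : g q ∈ P t := (hmemP _ _).mpr ⟨q, hqt, rfl⟩
        have hsideD : ∀ x, x ∈ P t → x ∉ P (q + 1) → ((x ∈ S) ↔ (g q ∈ S)) := by
          intro x hx1 hx2
          rw [hmemP] at hx1
          obtain ⟨i, hi, rfl⟩ := hx1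
          have hiq : q + 1 ≤ i := by
            by_contra hcon
            push_neg at hcon
            exact hx2 ((hmemP _ _).mpr ⟨i, by omega, rfl⟩)
          exact hrun i (by omega) hi
        -- identities
        have ida : P t ∩ sd (g t) = B := by
          apply Finset.Subset.antisymm
          · intro x hx
            rw [Finset.mem_inter, hmemsd] at hx
            obtain ⟨hx1, hx2⟩ := hx
            have hxq : x ∈ P q := by
              by_contra hxq
              by_cases hxq1 : x ∈ P (q + 1)
              · rw [hPsucc q, Finset.mem_insert] at hxq1
                rcases hxq1 with rfl | hxq1
                · exact htq hx2.symm
                · exact hxq hxq1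
              · have hxs := hsideD x hx1 hxq1
                exact htq (hx2.symm.trans hxs)
            rw [hBdef, Finset.mem_sdiff, hmemsd]
            exact ⟨hxq, fun hc => htq (hx2.symm.trans hc)⟩
          · intro x hx
            rw [hBdef, Finset.mem_sdiff, hmemsd] at hx
            rw [Finset.mem_inter, hmemsd]
            exact ⟨hPqt hx.1, iff_aux hx.2 htq⟩
        have idb : P t \ sd (g t) = insert (g q) A ∪ (P t \ P (q + 1)) := by
          apply Finset.Subset.antisymm
          · intro x hx
            rw [Finset.mem_sdiff, hmemsd] at hx
            obtain ⟨hx1, hx2⟩ := hx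
            rw [Finset.mem_union, Finset.mem_insert]
            by_cases hxq1 : x ∈ P (q + 1)
            · rw [hPsucc q, Finset.mem_insert] at hxq1
              rcases hxq1 with rfl | hxq
              · exact Or.inl (Or.inl rfl)
              · refine Or.inl (Or.inr ?_)
                rw [hAdef, Finset.mem_inter, hmemsd]
                exact ⟨hxq, iff_aux hx2 (fun hc => htq hc.symm)⟩
            · exact Or.inr (Finset.mem_sdiff.mpr ⟨hx1, hxq1⟩)
          · intro x hx
            rw [Finset.mem_union, Finset.mem_insert] at hx
            rw [Finset.mem_sdiff, hmemsd]
            rcases hx with (rfl | hxA) | hxD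
            · exact ⟨hgqPt, fun hc => htq hc.symm⟩
            · rw [hAdef, Finset.mem_inter, hmemsd] at hxA
              exact ⟨hPqt hxA.1, fun hc => htq (hc.symm.trans hxA.2)⟩
            · rw [Finset.mem_sdiff] at hxD
              have hxs := hsideD x hxD.1 hxD.2
              exact ⟨hxD.1, fun hc => htq (hc.symm.trans hxs)⟩
        have idc : P q ∪ insert (g t) B = insert (g t) (P q) := by
          have h1 : P q ∪ B = P q := Finset.union_eq_left.mpr hsubB
          rw [Finset.union_insert, h1]
        have idd : P q ∩ insert (g t) B = B := by
          apply Finset.Subset.antisymm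
          · intro x hx
            rw [Finset.mem_inter, Finset.mem_insert] at hx
            rcases hx with ⟨hxq, rfl | hxB⟩
            · exact absurd hxq hgtPq
            · exact hxB
          · intro x hx
            exact Finset.mem_inter.mpr ⟨hsubB hx, Finset.mem_insert.mpr (Or.inr hx)⟩
        have ide : insert (g q) (P q) ∪ (insert (g q) A ∪ (P t \ P (q + 1))) = P t := by
          rw [← hPsucc q]
          apply Finset.Subset.antisymm
          · refine Finset.union_subset (hPsub (q + 1) t (by omega)) (Finset.union_subset ?_ ?_)
            · exact Finset.insert_subset hgqPt (hsubA.trans hPqt)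
            · exact Finset.sdiff_subset
          · intro x hx
            by_cases h : x ∈ P (q + 1)
            · exact Finset.mem_union_left _ h
            · exact Finset.mem_union_right _
                (Finset.mem_union_right _ (Finset.mem_sdiff.mpr ⟨hx, h⟩))
        have idf : insert (g q) (P q) ∩ (insert (g q) A ∪ (P t \ P (q + 1))) =
            insert (g q) A := by
          rw [← hPsucc q]
          apply Finset.Subset.antisymm
          · intro x hx
            rw [Finset.mem_inter, Finset.mem_union] at hx
            rcases hx with ⟨hx1, hx2 | hx2⟩
            · exact hx2
            · exact absurd hx1 (Finset.mem_sdiff.mp hx2).2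
          · intro x hx
            have hxin : x ∈ P (q + 1) := by
              rw [hPsucc q]
              exact Finset.insert_subset_insert _ hsubA hx
            exact Finset.mem_inter.mpr ⟨hxin, Finset.mem_union_left _ hx⟩
        -- the four inequalities
        have ineq2 := hf (P q) (insert (g t) B)
        rw [idc, idd] at ineq2
        have ineq3 := hMC' q t (le_of_lt hqt) htn
        have ineq4 := hf (insert (g q) (P q)) (insert (g q) A ∪ (P t \ P (q + 1)))
        rw [ide, idf, ← hPsucc q] at ineq4
        rw [ida, idb]
        linarith
  -- final assembly
  have hact : ¬((g (n - 1) ∈ S) ↔ (g (n - 1 - 1) ∈ S)) := by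
    have h11 : n - 1 - 1 = n - 2 := by omega
    rw [h11]
    intro hc
    exact hgS2 (hc.mp hgS1)
  have hfin := claim (n - 1) hn1 (by omega) hact
  have hPn1 : P (n - 1) = Finset.univ \ {g (n - 1)} := by
    apply Finset.Subset.antisymm
    · intro x hx
      rw [hmemP] at hx
      obtain ⟨i, hi, rfl⟩ := hx
      rw [Finset.mem_sdiff, Finset.mem_singleton]
      refine ⟨Finset.mem_univ _, fun hc => ?_⟩
      have := hginj i (n - 1) (by omega) hn1 hc
      omega
    · intro x hx
      rw [Finset.mem_sdiff, Finset.mem_singleton] at hx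
      obtain ⟨k, rfl⟩ := hsurj x
      rw [hmemP]
      have hkval : (k : ℕ) ≠ n - 1 := by
        intro hc
        apply hx.2
        rw [hgv _ hn1]
        congr 1
        exact Fin.ext hc
      refine ⟨(k : ℕ), by omega, ?_⟩
      rw [hgv _ k.isLt]
  have hsdn : sd (g (n - 1)) = S := by
    simp only [hsd]
    rw [if_pos hgS1]
  have hA' : P (n - 1) ∩ sd (g (n - 1)) = S \ {g (n - 1)} := by
    rw [hsdn, hPn1]
    ext x
    simp only [Finset.mem_inter, Finset.mem_sdiff, Finset.mem_univ, true_and,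
      Finset.mem_singleton]
    exact and_comm
  have hins : insert (g (n - 1)) (S \ {g (n - 1)}) = S := by
    ext x
    simp only [Finset.mem_insert, Finset.mem_sdiff, Finset.mem_singleton]
    constructor
    · rintro (rfl | ⟨h1, _⟩)
      · exact hgS1
      · exact h1
    · intro h
      by_cases hx : x = g (n - 1)
      · exact Or.inl hx
      · exact Or.inr ⟨h, hx⟩
  have hB' : P (n - 1) \ sd (g (n - 1)) = Sᶜ := by
    rw [hsdn, hPn1]
    ext x
    simp only [Finset.mem_sdiff, Finset.mem_univ, true_and, Finset.mem_singleton,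
      Finset.mem_compl]
    constructor
    · rintro ⟨_, h2⟩
      exact h2
    · intro h
      refine ⟨fun hc => ?_, h⟩
      rw [hc] at h
      exact h hgS1
  have hsymP : f (P (n - 1)) = f {g (n - 1)} := by
    have h := hsym ({g (n - 1)} : Finset V)
    rw [Finset.compl_eq_univ_sdiff] at h
    rw [hPn1, ← h]
  have h0n := hMC' 0 (n - 1) (by omega) hn1
  rw [hP1, hP0] at h0n
  have hins0 : (insert (g (n - 1)) (∅ : Finset V)) = {g (n - 1)} := by simp
  rw [hins0] at h0n
  rw [hA', hins, hB', hsymP] at hfin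
  have hcS : f Sᶜ = f S := (hsym S).symm
  rw [hcS] at hfin
  have hfinal : f {g 0} ≤ f X := by
    rw [← hfSX]
    linarith
  exact le_trans (Finset.inf'_le _ (Finset.mem_univ (g 0))) hfinal
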